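/- Let F be a field and let ⟨U,V,W⟩ be a ⟨2,2,2;7⟩-algorithm over F such that M([U]₀), the 2×2 matrix whose row-major vectorization is the first row of U, is invertible. Let K ∈ F^{2×2} be an invertible matrix. Then there exists a ⟨2,2,2;7⟩-algorithm ⟨U',V',W'⟩ over F such that W' = W and the first row of U' equals vec(K). Moreover, if M([V]₀) is invertible then M([V']₀) is also invertible. -/

import Mathlib

open Matrix

/-- Row-major vectorization: `vec A (n*i+j) = A i j`. -/
def vec {F : Type*} {m n : ℕ} (A : Matrix (Fin m) (Fin n) F) : Fin (m * n) → F :=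
  fun r => A r.divNat r.modNat

/-- `⟨U, V, W⟩` is an `⟨m, n, p; t⟩`-algorithm over `F`: for all `A, B, C` of the appropriate
sizes, `trace (A * B * C) = ∑ r, (U ⬝ᵥ vec A) r * (V ⬝ᵥ vec B) r * (W ⬝ᵥ vec C) r`. -/
def IsMMAlg {F : Type*} [Field F] (m n p t : ℕ)
    (U : Matrix (Fin t) (Fin (m * n)) F)
    (V : Matrix (Fin t) (Fin (n * p)) F)
    (W : Matrix (Fin t) (Fin (p * m)) F) : Prop :=
  ∀ (A : Matrix (Fin m) (Fin n) F) (B : Matrix (Fin n) (Fin p) F) (C : Matrix (Fin p) (Fin m) F),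
    (A * B * C).trace =
      ∑ r : Fin t, U.mulVec (vec A) r * V.mulVec (vec B) r * W.mulVec (vec C) r
/-- `mat v` is the matrix whose row-major vectorization is `v` (the inverse of `vec`). -/
def mat {F : Type*} {m n : ℕ} (v : Fin (m * n) → F) : Matrix (Fin m) (Fin n) F :=
  fun i j => v (finProdFinEquiv (i, j))

lemma mat_vec {F : Type*} {m n : ℕ} (A : Matrix (Fin m) (Fin n) F) : mat (_root_.vec A) = A := by
  ext i j
  have h : (finProdFinEquiv (m := m) (n := n)).symm (finProdFinEquiv (i, j)) = (i, j) :=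
    Equiv.symm_apply_apply _ _
  simp only [mat, _root_.vec]
  have h1 : (finProdFinEquiv (i, j) : Fin (m*n)).divNat = i := congrArg Prod.fst h
  have h2 : (finProdFinEquiv (i, j) : Fin (m*n)).modNat = j := congrArg Prod.snd h
  rw [h1, h2]

lemma mulVec_vec {F : Type*} [CommRing F] {m n t : ℕ}
    (U : Matrix (Fin t) (Fin (m * n)) F) (A : Matrix (Fin m) (Fin n) F) (r : Fin t) :
    U.mulVec (_root_.vec A) r = ∑ i, ∑ j, mat (U r) i j * A i j := by
  rw [mulVec, dotProduct,
    ← Equiv.sum_comp (finProdFinEquiv (m := m) (n := n)) (fun i => U r i * _root_.vec A i),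
    Fintype.sum_prod_type]
  refine Finset.sum_congr rfl fun i _ => Finset.sum_congr rfl fun j _ => ?_
  have h : (finProdFinEquiv (m := m) (n := n)).symm (finProdFinEquiv (i, j)) = (i, j) :=
    Equiv.symm_apply_apply _ _
  simp only [mat, _root_.vec]
  have h1 : (finProdFinEquiv (i, j) : Fin (m*n)).divNat = i := congrArg Prod.fst h
  have h2 : (finProdFinEquiv (i, j) : Fin (m*n)).modNat = j := congrArg Prod.snd h
  rw [h1, h2]

/-- Given a `⟨2,2,2;7⟩`-algorithm `⟨U,V,W⟩` with `mat ([U]₀)` invertible, and any invertible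
`K`, there is a `⟨2,2,2;7⟩`-algorithm `⟨U',V',W⟩` with `[U']₀ = _root_.vec K`; moreover
invertibility of `mat ([V]₀)` implies that of `mat ([V']₀)`. -/
theorem exists_modified_first_row {F : Type*} [Field F]
    (U V W : Matrix (Fin 7) (Fin (2 * 2)) F)
    (halg : IsMMAlg 2 2 2 7 U V W)
    (hU0 : IsUnit (mat (U 0)))
    (K : Matrix (Fin 2) (Fin 2) F) (hK : IsUnit K) :
    ∃ (U' V' : Matrix (Fin 7) (Fin (2 * 2)) F),
      IsMMAlg 2 2 2 7 U' V' W ∧ U' 0 = _root_.vec K ∧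
        (IsUnit (mat (V 0)) → IsUnit (mat (V' 0))) := by
  set G : Matrix (Fin 2) (Fin 2) F := (mat (U 0))⁻¹ * K with hGdef
  have hU0d : IsUnit (mat (U 0)).det := (isUnit_iff_isUnit_det _).mp hU0
  have hG : IsUnit G :=
    ((isUnit_iff_isUnit_det _).mpr (isUnit_nonsing_inv_det _ hU0d)).mul hK
  have hGd : IsUnit G.det := (isUnit_iff_isUnit_det _).mp hG
  have hGinv : IsUnit G⁻¹ := (isUnit_iff_isUnit_det _).mpr (isUnit_nonsing_inv_det _ hGd)
  refine ⟨Matrix.of fun r => _root_.vec (mat (U r) * G), Matrix.of fun r => _root_.vec (G⁻¹ * mat (V r)),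
    ?_, ?_, ?_⟩
  · intro A B C
    have key : A * Gᵀ * ((G⁻¹)ᵀ * B) * C = A * B * C := by
      have : Gᵀ * (G⁻¹)ᵀ = 1 := by
        rw [← transpose_mul, nonsing_inv_mul G hGd, transpose_one]
      rw [mul_assoc A Gᵀ, ← mul_assoc Gᵀ, this, one_mul]
    rw [← key, halg (A * Gᵀ) ((G⁻¹)ᵀ * B) C]
    refine Finset.sum_congr rfl fun r _ => ?_
    have hu : (Matrix.of fun r => _root_.vec (mat (U r) * G)).mulVec (_root_.vec A) r
        = U.mulVec (_root_.vec (A * Gᵀ)) r := by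
      rw [mulVec_vec, mulVec_vec,
        show (Matrix.of fun r => _root_.vec (mat (U r) * G)) r = _root_.vec (mat (U r) * G) from rfl]
      simp only [Matrix.of_apply, mat_vec, mul_apply, transpose_apply, Fin.sum_univ_two]
      ring
    have hv : (Matrix.of fun r => _root_.vec (G⁻¹ * mat (V r))).mulVec (_root_.vec B) r
        = V.mulVec (_root_.vec ((G⁻¹)ᵀ * B)) r := by
      rw [mulVec_vec, mulVec_vec,
        show (Matrix.of fun r => _root_.vec (G⁻¹ * mat (V r))) r = _root_.vec (G⁻¹ * mat (V r)) from rfl]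
      simp only [Matrix.of_apply, mat_vec, mul_apply, transpose_apply, Fin.sum_univ_two]
      ring
    rw [hu, hv]
  · show _root_.vec (mat (U 0) * G) = _root_.vec K
    rw [hGdef, ← mul_assoc, mul_nonsing_inv _ hU0d, one_mul]
  · intro hV0
    rw [show (Matrix.of fun r => _root_.vec (G⁻¹ * mat (V r))) 0 = _root_.vec (G⁻¹ * mat (V 0)) from rfl,
      mat_vec]
    exact hGinv.mul hV0
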